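/- Fix α ∈ ℝ and set ᾱ = max{0,α}. There is a constant c > 0 (depending on α) such that for all m ≥ 1, ∫_m^∞ ∫_0^∞ Ai(y+λ+ᾱ)² e^{2(1+α)λ} dλ dy ≤ c·e^{−(4/3)m^{3/2}}. -/

import Mathlib

/-!
With `V = Ai·Ai'` and `E = Ai'² - x·Ai²`, the Airy equation gives `V' = Ai'² + x·Ai²`, which is
`≥ 0` on `[0, ∞)`, and `E' = -Ai² ≤ 0`. Since `Ai → 0`, `V` cannot become positive on `[0, ∞)`
(else `Ai²` would grow linearly); then `E` cannot become negative (else `V' ≥ -E` would make `V`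
grow linearly). Hence `(Ai²)' = 2V ≤ -2√x·Ai²`, i.e. `Ai(s)² e^{(4/3)s^{3/2}}` is nonincreasing
on `[0, ∞)`. In the double integral, superadditivity of `t ↦ t^{3/2}` splits
`(y + λ + ᾱ)^{3/2} ≥ m^{3/2} + (y - m)^{3/2} + λ^{3/2}`, and `e^{-(4/3)(y-m)^{3/2}}` and
`e^{-(4/3)λ^{3/2} + 2(1+α)λ}` are dominated by multiples of `e^{-(y-m)}` and `e^{-λ}`.
-/

open MeasureTheory

/-- `Ai` is the Airy function: the solution of `Ai″(x) = x·Ai(x)` decaying at `+∞`,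
normalized by `Ai(0) = 3^{−2/3}/Γ(2/3)`. -/
def IsAiryFn (Ai : ℝ → ℝ) : Prop :=
  ContDiff ℝ ⊤ Ai ∧ (∀ x, deriv (deriv Ai) x = x * Ai x) ∧
    Filter.Tendsto Ai Filter.atTop (nhds 0) ∧
    Ai 0 = (3 : ℝ) ^ (-(2 : ℝ) / 3) / Real.Gamma (2 / 3)

open Real Set Filter Topology

lemma tendsto_atTop_of_hasDerivAt_ge {g g' : ℝ → ℝ} {a δ : ℝ} (hδ : 0 < δ)
    (hg : ∀ x ≥ a, HasDerivAt g (g' x) x) (hg' : ∀ x ≥ a, δ ≤ g' x) :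
    Tendsto g atTop atTop := by
  have hgrowth : ∀ x ≥ a, g a + δ * (x - a) ≤ g x := fun x hx => by
    have := (convex_Ici a).mul_sub_le_image_sub_of_le_deriv
      (fun y hy => (hg y hy).continuousAt.continuousWithinAt)
      (fun y hy => (hg y (interior_subset hy)).differentiableAt.differentiableWithinAt)
      (fun y hy => (hg y (interior_subset hy)).deriv ▸ hg' y (interior_subset hy))
      a self_mem_Ici x hx hx
    linarith
  refine tendsto_atTop_mono' _ ((eventually_ge_atTop a).mono hgrowth) ?_
  exact tendsto_atTop_add_const_left _ _
    (((tendsto_atTop_add_const_right _ _ tendsto_id).const_mul_atTop hδ))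

lemma exists_mul_le_mul_rpow_add (a : ℝ) {k p : ℝ} (hk : 0 < k) (hp : 1 < p) :
    ∃ c, ∀ t, 0 ≤ t → a * t ≤ k * t ^ p + c := by
  set b := max a 0
  set T := (b / k) ^ (p - 1)⁻¹
  refine ⟨b * T, fun t ht => ?_⟩
  have hab : a * t ≤ b * t := mul_le_mul_of_nonneg_right (le_max_left _ _) ht
  rcases le_or_gt t T with htT | hTt
  · have : b * t ≤ b * T := mul_le_mul_of_nonneg_left htT (le_max_right _ _)
    have : 0 ≤ k * t ^ p := by positivity
    linarith
  · have ht0 : 0 < t := (by positivity : 0 ≤ T).trans_lt hTt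
    have hbt : b ≤ k * t ^ (p - 1) := by
      rw [← div_le_iff₀' hk]
      calc b / k = T ^ (p - 1) := (rpow_inv_rpow (by positivity) (by linarith)).symm
        _ ≤ t ^ (p - 1) := rpow_le_rpow (by positivity) hTt.le (by linarith)
    have htp : t ^ p = t ^ (p - 1) * t := by
      rw [rpow_sub_one ht0.ne', div_mul_cancel₀ _ ht0.ne']
    have : 0 ≤ b * T := by positivity
    nlinarith

lemma rpow_add_add_le_rpow {p : ℝ} (hp : 1 ≤ p) {m y l β : ℝ} (hm : 0 ≤ m) (hmy : m ≤ y)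
    (hl : 0 ≤ l) (hβ : 0 ≤ β) : m ^ p + (y - m) ^ p + l ^ p ≤ (y + l + β) ^ p :=
  calc m ^ p + (y - m) ^ p + l ^ p ≤ (m + (y - m)) ^ p + l ^ p := by
        gcongr; exact add_rpow_le_rpow_add hm (by linarith) hp
    _ ≤ (m + (y - m) + l) ^ p := add_rpow_le_rpow_add (by linarith) hl hp
    _ ≤ (y + l + β) ^ p := rpow_le_rpow (by linarith) (by linarith) (by linarith)

lemma setIntegral_Ioi_le_mul_exp_neg {f : ℝ → ℝ} {a K : ℝ} (hf₀ : ∀ x > a, 0 ≤ f x)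
    (hf : ∀ x > a, f x ≤ K * exp (-x)) : ∫ x in Ioi a, f x ≤ K * exp (-a) := by
  calc ∫ x in Ioi a, f x ≤ ∫ x in Ioi a, K * exp (-x) :=
        integral_mono_of_nonneg (ae_restrict_of_forall_mem measurableSet_Ioi hf₀)
          ((integrableOn_exp_neg_Ioi a).const_mul K)
          (ae_restrict_of_forall_mem measurableSet_Ioi hf)
    _ = K * exp (-a) := by rw [integral_const_mul, integral_exp_neg_Ioi]

section AiryEquation

variable {f f' : ℝ → ℝ}

lemma mul_deriv_nonpos_of_airy (hf : ∀ x, HasDerivAt f (f' x) x)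
    (hf' : ∀ x, HasDerivAt f' (x * f x) x) (hlim : Tendsto f atTop (𝓝 0)) {x : ℝ}
    (hx : 0 ≤ x) :
    f x * f' x ≤ 0 := by
  have hV : MonotoneOn (fun y => f y * f' y) (Ici 0) :=
    monotoneOn_of_hasDerivWithinAt_nonneg (convex_Ici 0)
      (fun y _ => ((hf y).mul (hf' y)).continuousAt.continuousWithinAt)
      (fun y _ => ((hf y).mul (hf' y)).hasDerivWithinAt)
      (fun y hy => by
        rw [interior_Ici] at hy
        nlinarith [sq_nonneg (f' y), mul_nonneg (le_of_lt hy) (sq_nonneg (f y))])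
  by_contra! hpos
  have hsq : Tendsto (fun y => f y * f y) atTop atTop :=
    tendsto_atTop_of_hasDerivAt_ge (mul_pos two_pos hpos) (fun y _ => (hf y).mul (hf y))
      (fun y hy => by linarith [hV hx (hx.trans hy) hy])
  exact not_tendsto_nhds_of_tendsto_atTop hsq 0 (by simpa using hlim.mul hlim)

lemma mul_sq_le_deriv_sq_of_airy (hf : ∀ x, HasDerivAt f (f' x) x)
    (hf' : ∀ x, HasDerivAt f' (x * f x) x) (hlim : Tendsto f atTop (𝓝 0)) (x : ℝ) :
    x * f x ^ 2 ≤ f' x ^ 2 := by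
  have hE : Antitone (fun y => f' y ^ 2 - y * f y ^ 2) :=
    antitone_of_hasDerivAt_nonpos (f' := fun y => -(f y ^ 2))
      (fun y => by
        refine (((hf' y).pow 2).sub ((hasDerivAt_id' y).mul ((hf y).pow 2))).congr_deriv ?_
        simp only [Pi.pow_apply]
        push_cast
        ring)
      (fun y => by simp only [Pi.zero_apply]; nlinarith [sq_nonneg (f y)])
  by_contra! hneg
  have hV : Tendsto (fun y => f y * f' y) atTop atTop :=
    tendsto_atTop_of_hasDerivAt_ge (sub_pos.2 hneg) (fun y _ => (hf y).mul (hf' y))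
      (fun y hy => by nlinarith [hE hy, sq_nonneg (f' y)])
  obtain ⟨y, hy₀, hy⟩ := ((eventually_ge_atTop 0).and (hV.eventually_gt_atTop 0)).exists
  exact (mul_deriv_nonpos_of_airy hf hf' hlim hy₀).not_gt hy

lemma sq_le_sq_zero_mul_exp_of_airy (hf : ∀ x, HasDerivAt f (f' x) x)
    (hf' : ∀ x, HasDerivAt f' (x * f x) x) (hlim : Tendsto f atTop (𝓝 0)) {s : ℝ}
    (hs : 0 ≤ s) :
    f s ^ 2 ≤ f 0 ^ 2 * exp (-(4 / 3) * s ^ ((3 : ℝ) / 2)) := by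
  set w : ℝ → ℝ := fun x => exp (4 / 3 * x ^ ((3 : ℝ) / 2))
  have hw : ∀ x, HasDerivAt w (w x * (2 * √x)) x := fun x => by
    refine (((hasDerivAt_rpow_const (Or.inr (by norm_num))).const_mul (4 / 3)).exp).congr_deriv ?_
    rw [sqrt_eq_rpow]
    norm_num
    ring
  have hfw : ∀ x, HasDerivAt (fun x => f x ^ 2 * w x)
      (w x * (2 * (f x * f' x + √x * f x ^ 2))) x := fun x => by
    refine (((hf x).pow 2).mul (hw x)).congr_deriv ?_
    simp only [Pi.pow_apply]
    push_cast
    ring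
  have hanti : AntitoneOn (fun x => f x ^ 2 * w x) (Ici 0) := by
    refine antitoneOn_of_hasDerivWithinAt_nonpos (convex_Ici 0)
      (fun x _ => (hfw x).continuousAt.continuousWithinAt) (fun x _ => (hfw x).hasDerivWithinAt)
      (fun x hx => ?_)
    rw [interior_Ici] at hx
    have hkey : √x * f x ^ 2 ≤ -(f x * f' x) := by
      have hff' := mul_deriv_nonpos_of_airy hf hf' hlim hx.le
      refine (sq_le_sq₀ (by positivity) (by linarith)).1 ?_
      calc (√x * f x ^ 2) ^ 2 = x * f x ^ 2 * f x ^ 2 := by rw [mul_pow, sq_sqrt hx.le]; ring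
        _ ≤ f' x ^ 2 * f x ^ 2 := by
          gcongr; exact mul_sq_le_deriv_sq_of_airy hf hf' hlim x
        _ = (-(f x * f' x)) ^ 2 := by ring
    have : 0 < w x := exp_pos _
    nlinarith
  have hmono := hanti self_mem_Ici hs hs
  simp only [w, zero_rpow (by norm_num : (3 : ℝ) / 2 ≠ 0), mul_zero, exp_zero, mul_one] at hmono
  rwa [neg_mul, exp_neg, ← div_eq_mul_inv, le_div_iff₀ (exp_pos _)]

end AiryEquation

lemma IsAiryFn.sq_le_sq_zero_mul_exp {Ai : ℝ → ℝ} (hAi : IsAiryFn Ai) {s : ℝ}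
    (hs : 0 ≤ s) :
    Ai s ^ 2 ≤ Ai 0 ^ 2 * exp (-(4 / 3) * s ^ ((3 : ℝ) / 2)) := by
  obtain ⟨hsmooth, hode, hlim, -⟩ := hAi
  have hderiv : ContDiff ℝ 1 (deriv Ai) := (hsmooth.of_le le_top : ContDiff ℝ (1 + 1) Ai).deriv'
  refine sq_le_sq_zero_mul_exp_of_airy (fun x => (hsmooth.differentiable (by simp) x).hasDerivAt)
    (fun x => ?_) hlim hs
  rw [← hode x]
  exact (hderiv.differentiable one_ne_zero x).hasDerivAt

lemma IsAiryFn.exists_sq_mul_exp_le {Ai : ℝ → ℝ} (hAi : IsAiryFn Ai) (a : ℝ) :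
    ∃ C ≥ 0, ∀ {β m y l : ℝ}, 0 ≤ β → 0 ≤ m → m ≤ y → 0 ≤ l →
      Ai (y + l + β) ^ 2 * exp (a * l) ≤
        C * exp (-(4 / 3) * m ^ ((3 : ℝ) / 2)) * exp m * exp (-y) * exp (-l) := by
  have hk : (0 : ℝ) < 4 / 3 := by norm_num
  have hp : (1 : ℝ) < 3 / 2 := by norm_num
  obtain ⟨c₀, hc₀⟩ := exists_mul_le_mul_rpow_add (a + 1) hk hp
  obtain ⟨c₁, hc₁⟩ := exists_mul_le_mul_rpow_add 1 hk hp
  refine ⟨Ai 0 ^ 2 * exp (c₀ + c₁), by positivity, ?_⟩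
  intro β m y l hβ hm hmy hl
  have hsplit := rpow_add_add_le_rpow hp.le hm hmy hl hβ
  calc Ai (y + l + β) ^ 2 * exp (a * l)
      ≤ Ai 0 ^ 2 * exp (-(4 / 3) * (y + l + β) ^ ((3 : ℝ) / 2) + a * l) := by
        rw [exp_add, ← mul_assoc]
        gcongr
        exact hAi.sq_le_sq_zero_mul_exp (by linarith)
    _ ≤ Ai 0 ^ 2 * exp (c₀ + c₁ + -(4 / 3) * m ^ ((3 : ℝ) / 2) + m + -y + -l) := by
        refine mul_le_mul_of_nonneg_left (exp_le_exp.2 ?_) (sq_nonneg _)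
        linarith [hc₀ l hl, hc₁ (y - m) (by linarith)]
    _ = _ := by simp only [exp_add]; ring

/-- Hilbert–Schmidt bound: with `ᾱ = max{0,α}`, there is `c > 0` (depending on `α`)
so that for all `m ≥ 1`,
`∫_m^∞ ∫_0^∞ Ai(y+λ+ᾱ)² e^{2(1+α)λ} dλ dy ≤ c e^{−(4/3)m^{3/2}}`. -/
theorem hs_bound_second_factor (Ai : ℝ → ℝ) (hAi : IsAiryFn Ai) (α : ℝ) :
    ∃ c > (0 : ℝ), ∀ m : ℝ, 1 ≤ m →
      (∫ y in Set.Ioi m, ∫ l in Set.Ioi (0 : ℝ),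
          Ai (y + l + max 0 α) ^ 2 * Real.exp (2 * (1 + α) * l)) ≤
        c * Real.exp (-(4 / 3) * m ^ ((3 : ℝ) / 2)) := by
  obtain ⟨C, hC, hbound⟩ := hAi.exists_sq_mul_exp_le (2 * (1 + α))
  refine ⟨C + 1, by positivity, fun m hm => ?_⟩
  set K := C * exp (-(4 / 3) * m ^ ((3 : ℝ) / 2)) * exp m
  have hinner : ∀ y > m, ∫ l in Ioi 0, Ai (y + l + max 0 α) ^ 2 * exp (2 * (1 + α) * l)
      ≤ K * exp (-y) := fun y hy => by
    simpa only [neg_zero, exp_zero, mul_one] using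
      setIntegral_Ioi_le_mul_exp_neg (fun l _ => by positivity)
        (fun l hl => hbound (le_max_left 0 α) (by linarith) hy.le hl.le)
  calc _ ≤ K * exp (-m) :=
        setIntegral_Ioi_le_mul_exp_neg (fun y _ => integral_nonneg fun l => by positivity) hinner
    _ = C * exp (-(4 / 3) * m ^ ((3 : ℝ) / 2)) := by
        rw [mul_assoc, ← exp_add, add_neg_cancel, exp_zero, mul_one]
    _ ≤ _ := by gcongr; linarith
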